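/- Let p be prime, a, b ∈ {0,...,p-1} with a ≠ b, and m, n ∈ {1,...,p-2} with m < n. Then the sum over k from 0 to p-1, excluding k ≡ -a and k ≡ -b mod p, of (a+k)^m/(b+k)^n is congruent to 0 mod p. -/

import Mathlib

/-!
On the excluded residues the summand is already `0` (a zero numerator, or `0⁻¹ = 0`), so the
sum runs over all of `𝔽_p`. There `(y ^ n)⁻¹ = y ^ (p - 1 - n)`, which turns the summand into a
polynomial of degree `m + p - 1 - n < p - 1`, and such a polynomial sums to `0` over `𝔽_p`
because every power sum `∑ x, x ^ i` with `i < p - 1` vanishes.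
-/

open Finset Polynomial

theorem Polynomial.sum_eval_eq_zero_of_natDegree_lt {K : Type*} [Field K] [Fintype K] (f : K[X])
    (hf : f.natDegree < Fintype.card K - 1) : ∑ x : K, f.eval x = 0 := by
  simp_rw [eval_eq_sum_range]
  rw [sum_comm]
  refine sum_eq_zero fun i hi => ?_
  rw [← mul_sum, FiniteField.sum_pow_lt_card_sub_one K i (by rw [mem_range] at hi; omega),
    mul_zero]

theorem FiniteField.inv_pow_eq_pow_card_sub_one_sub {K : Type*} [Field K] [Fintype K] (y : K)
    {n : ℕ} (hn₀ : n ≠ 0) (hn : n < Fintype.card K - 1) :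
    (y ^ n)⁻¹ = y ^ (Fintype.card K - 1 - n) := by
  rcases eq_or_ne y 0 with rfl | hy
  · rw [zero_pow hn₀, zero_pow (by omega), inv_zero]
  · refine inv_eq_of_mul_eq_one_right ?_
    rw [← pow_add, Nat.add_sub_cancel' hn.le, pow_card_sub_one_eq_one y hy]

theorem FiniteField.sum_add_pow_mul_inv_add_pow_eq_zero {K : Type*} [Field K] [Fintype K]
    (a b : K) {m n : ℕ} (hmn : m < n) (hn : n < Fintype.card K - 1) :
    ∑ x : K, (a + x) ^ m * ((b + x) ^ n)⁻¹ = 0 := by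
  simp_rw [inv_pow_eq_pow_card_sub_one_sub _ (by omega : n ≠ 0) hn]
  have hdeg : ((X + C a) ^ m * (X + C b) ^ (Fintype.card K - 1 - n)).natDegree
      < Fintype.card K - 1 := by
    refine natDegree_mul_le.trans_lt ?_
    grw [natDegree_pow_le, natDegree_pow_le, natDegree_X_add_C, natDegree_X_add_C]
    omega
  simpa [add_comm] using sum_eval_eq_zero_of_natDegree_lt _ hdeg

theorem ZMod.sum_range_natCast {M : Type*} [AddCommMonoid M] (n : ℕ) [NeZero n]
    (f : ZMod n → M) : ∑ k ∈ range n, f k = ∑ x : ZMod n, f x :=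
  sum_nbij' (↑) ZMod.val (by simp) (fun x _ => by simpa using x.val_lt)
    (fun _ hk => ZMod.val_cast_of_lt (mem_range.1 hk)) (fun x _ => ZMod.natCast_zmod_val x)
    (fun _ _ => rfl)

theorem sum_ratio_shifted_zero_general (p a b m n : ℕ) [Fact p.Prime]
    (hm : 1 ≤ m) (hn : n ≤ p - 2) (hmn : m < n) :
    (∑ k ∈ (Finset.range p).filter
        (fun (k : ℕ) => (k : ZMod p) ≠ -(a : ZMod p) ∧ (k : ZMod p) ≠ -(b : ZMod p)),
        ((a : ZMod p) + (k : ZMod p)) ^ m * (((b : ZMod p) + (k : ZMod p)) ^ n)⁻¹) = 0 := by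
  have hp : 2 ≤ p := (Fact.out : p.Prime).two_le
  rw [sum_filter_of_ne,
    ZMod.sum_range_natCast p fun x => ((a : ZMod p) + x) ^ m * (((b : ZMod p) + x) ^ n)⁻¹]
  · exact FiniteField.sum_add_pow_mul_inv_add_pow_eq_zero _ _ hmn (by rw [ZMod.card]; omega)
  · intro k _ hk
    refine ⟨fun h => hk ?_, fun h => hk ?_⟩ <;>
      simp [h, zero_pow (by omega : m ≠ 0), zero_pow (by omega : n ≠ 0)]

theorem sum_ratio_shifted_zero (p a b m n : ℕ) [Fact p.Prime]
    (ha : a ≤ p - 1) (hb : b ≤ p - 1) (hab : a ≠ b)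
    (hm : 1 ≤ m) (hn : n ≤ p - 2) (hmn : m < n) :
    (∑ k ∈ (Finset.range p).filter
        (fun (k : ℕ) => (k : ZMod p) ≠ -(a : ZMod p) ∧ (k : ZMod p) ≠ -(b : ZMod p)),
        ((a : ZMod p) + (k : ZMod p)) ^ m * (((b : ZMod p) + (k : ZMod p)) ^ n)⁻¹) = 0 :=
  sum_ratio_shifted_zero_general p a b m n hm hn hmn
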